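/- If G is the cycle graph on 3n vertices (n ≥ 1), then |χ̃(Ind(G))| = 2 and the decycling number φ(G) = 1, so the bound |χ̃(Ind(G))| ≤ 2^{φ(G)} is tight. -/

import Mathlib

open Finset

attribute [local instance] Classical.propDecidable

/-- `s` is an independent set of the graph `G`. -/
def SimpleGraph.IsIndep {V : Type*} (G : SimpleGraph V) (s : Finset V) : Prop :=
  ∀ u ∈ s, ∀ v ∈ s, ¬ G.Adj u v

/-!
Write `α(A) = ∑ (-1)^|s|` over the independent subsets `s ⊆ A`. Splitting by whether `s` contains
a vertex `v ∉ B` gives `α(B ∪ {v}) = α(B) - α(B \ N(v))`. Along a path this is the recurrence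
`p(k+2) = p(k+1) - p(k)`, whose solution `1, 0, -1, -1, 0, 1, …` satisfies `p(k+3) = -p(k)`.
Deleting one vertex of the cycle `C_{j+3}` leaves the path on `j+2` vertices, and removing its closed
neighbourhood that on `j` vertices, so `α(C_{j+3}) = p(j+2) - p(j)`, which is `±2` when `3 ∣ j`.
The same deleted vertex turns the cycle, which is not a forest, into a path, so `φ(C_m) = 1`.
-/

namespace SimpleGraph

/-- The independence polynomial of `G[A]` at `-1`, i.e. `-χ̃(Ind(G[A]))`. -/
noncomputable def altIndepSum {V : Type*} (G : SimpleGraph V) (A : Finset V) : ℤ :=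
  ∑ s ∈ A.powerset with G.IsIndep s, (-1) ^ s.card

section

variable {V : Type*} (G : SimpleGraph V)

theorem altIndepSum_empty : G.altIndepSum ∅ = 1 := by
  rw [altIndepSum, powerset_empty, sum_filter, sum_singleton, if_pos (by simp [IsIndep])]
  rfl

theorem isIndep_insert [DecidableEq V] {v : V} {t : Finset V} :
    G.IsIndep (insert v t) ↔ G.IsIndep t ∧ ∀ w ∈ t, ¬G.Adj v w := by
  simp only [IsIndep, mem_insert, forall_eq_or_imp, G.irrefl, not_false_eq_true, true_and]
  constructor
  · rintro ⟨hv, ht⟩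
    exact ⟨fun u hu w hw => (ht u hu).2 w hw, hv⟩
  · rintro ⟨ht, hv⟩
    exact ⟨hv, fun u hu => ⟨fun h => hv u hu h.symm, ht u hu⟩⟩

theorem altIndepSum_insert [DecidableEq V] [DecidableRel G.Adj] {v : V} {B : Finset V}
    (hv : v ∉ B) :
    G.altIndepSum (insert v B) = G.altIndepSum B - G.altIndepSum {w ∈ B | ¬G.Adj v w} := by
  simp only [altIndepSum, sum_filter]
  rw [sum_powerset_insert hv, sub_eq_add_neg, ← sum_neg_distrib]
  congr 1
  have hsub : {w ∈ B | ¬G.Adj v w}.powerset ⊆ B.powerset := powerset_mono.2 (filter_subset _ B)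
  rw [← sum_subset hsub]
  · refine sum_congr rfl fun t ht => ?_
    have ht' : ∀ w ∈ t, w ∈ B ∧ ¬G.Adj v w := fun w hw => mem_filter.1 (mem_powerset.1 ht hw)
    have hvt : v ∉ t := fun h => hv (ht' v h).1
    rw [isIndep_insert, card_insert_of_notMem hvt, pow_succ, and_iff_left fun w hw => (ht' w hw).2]
    split_ifs <;> ring
  · intro t ht hnt
    refine if_neg fun hI => hnt (mem_powerset.2 fun w hw => ?_)
    exact mem_filter.2 ⟨mem_powerset.1 ht hw, ((G.isIndep_insert).1 hI).2 w hw⟩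

end

noncomputable def decyclingNumber {V : Type*} (G : SimpleGraph V) : ℕ :=
  sInf {k : ℕ | ∃ D : Finset V, D.card = k ∧ (G.induce ((↑D : Set V)ᶜ)).IsAcyclic}

theorem decyclingNumber_eq_one {V : Type*} {G : SimpleGraph V} (hG : ¬G.IsAcyclic) {v : V}
    (hv : (G.induce ({v}ᶜ : Set V)).IsAcyclic) : G.decyclingNumber = 1 := by
  set S := {k : ℕ | ∃ D : Finset V, D.card = k ∧ (G.induce ((↑D : Set V)ᶜ)).IsAcyclic}
  have hone : 1 ∈ S := ⟨{v}, card_singleton v, by rwa [coe_singleton]⟩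
  have hzero : 0 ∉ S := by
    rintro ⟨D, hD, hD_acyc⟩
    rw [card_eq_zero.mp hD, coe_empty, Set.compl_empty] at hD_acyc
    exact hG ((induceUnivIso G).isAcyclic_iff.mp hD_acyc)
  refine le_antisymm (Nat.sInf_le hone) (Nat.one_le_iff_ne_zero.mpr fun h => ?_)
  exact hzero (h ▸ Nat.sInf_mem ⟨1, hone⟩)

theorem pathGraph_isAcyclic (n : ℕ) : (pathGraph n).IsAcyclic := by
  suffices h : ∀ u v : Fin n, u.val + 1 = v.val → (pathGraph n).IsBridge s(u, v) by
    rw [isAcyclic_iff_forall_adj_isBridge]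
    intro u v huv
    rcases pathGraph_adj.mp huv with huv | hvu
    · exact h u v huv
    · rw [Sym2.eq_swap]
      exact h v u hvu
  intro u v huv
  rw [isBridge_iff]
  rintro ⟨p⟩
  -- the deleted edge is the only one leaving `{w | w ≤ u}`
  obtain ⟨d, -, hd₁, hd₂⟩ := p.exists_boundary_dart {w | w.val ≤ u.val} (by simp) (by simp; omega)
  obtain ⟨hadj, hne⟩ := deleteEdges_adj.mp d.adj
  simp only [Set.mem_ofPred_eq, not_le] at hd₁ hd₂
  rw [pathGraph_adj] at hadj
  have hfst : d.fst = u := Fin.ext (by omega)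
  have hsnd : d.snd = v := Fin.ext (by omega)
  exact hne (by rw [hfst, hsnd]; rfl)

theorem cycleGraph_adj_iff_val {m : ℕ} (hm : 2 ≤ m) {u v : Fin m} :
    (cycleGraph m).Adj u v ↔ u.val + 1 = v.val ∨ v.val + 1 = u.val ∨
      (u.val = 0 ∧ v.val + 1 = m) ∨ (v.val = 0 ∧ u.val + 1 = m) := by
  rw [cycleGraph_adj']
  rcases lt_trichotomy u v with h | rfl | h
  · rw [Fin.coe_sub_iff_lt.mpr h, Fin.sub_val_of_le h.le]
    have := Fin.lt_def.mp h
    omega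
  · rw [Fin.sub_val_of_le le_rfl]
    omega
  · rw [Fin.coe_sub_iff_lt.mpr h, Fin.sub_val_of_le h.le]
    have := Fin.lt_def.mp h
    omega

theorem isAcyclic_induce_compl_zero_cycleGraph (m : ℕ) [NeZero m] :
    ((cycleGraph m).induce ({0}ᶜ : Set (Fin m))).IsAcyclic := by
  let f : (cycleGraph m).induce ({0}ᶜ : Set (Fin m)) →g pathGraph m :=
    { toFun := Subtype.val
      map_rel' := by
        rintro ⟨u, hu⟩ ⟨v, hv⟩ huv
        have hne : u.val ≠ v.val := fun h => huv.ne (Subtype.ext (Fin.ext h))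
        have hm : 2 ≤ m := by have := u.isLt; have := v.isLt; omega
        simp only [Set.mem_compl_iff, Set.mem_singleton_iff, Fin.ext_iff, Fin.val_zero] at hu hv
        rw [comap_adj, Function.Embedding.coe_subtype, cycleGraph_adj_iff_val hm] at huv
        rw [pathGraph_adj]
        simp only at huv ⊢
        omega }
  exact (pathGraph_isAcyclic m).comap f Subtype.val_injective

def altIndepSumPath : ℕ → ℤ
  | 0 => 1
  | 1 => 0
  | k + 2 => altIndepSumPath (k + 1) - altIndepSumPath k

theorem altIndepSumPath_add_three (k : ℕ) : altIndepSumPath (k + 3) = -altIndepSumPath k := by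
  rw [altIndepSumPath, altIndepSumPath]
  ring

theorem altIndepSumPath_three_mul_add (j r : ℕ) :
    altIndepSumPath (3 * j + r) = (-1) ^ j * altIndepSumPath r := by
  induction j with
  | zero => simp
  | succ j ih =>
    rw [show 3 * (j + 1) + r = 3 * j + r + 3 by ring, altIndepSumPath_add_three, ih]
    ring

def cycleArc (m a k : ℕ) : Finset (Fin m) := {v | a ≤ v.val ∧ v.val < a + k}

theorem altIndepSum_cycleArc {m a : ℕ} (k : ℕ) (h : a + k < m) :
    (cycleGraph m).altIndepSum (cycleArc m a k) = altIndepSumPath k := by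
  induction k using Nat.twoStepInduction with
  | zero =>
    rw [show cycleArc m a 0 = ∅ by ext; simp [cycleArc], altIndepSum_empty, altIndepSumPath]
  | one =>
    have hsingle : cycleArc m a 1 = {⟨a, by omega⟩} := by
      ext; simp [cycleArc, Fin.ext_iff]; omega
    rw [hsingle, ← insert_empty, altIndepSum_insert _ (notMem_empty _), filter_empty, sub_self,
      altIndepSumPath]
  | more k ih₀ ih₁ =>
    have hm : 2 ≤ m := by omega
    set v : Fin m := ⟨a + k + 1, by omega⟩
    have hinsert : cycleArc m a (k + 2) = insert v (cycleArc m a (k + 1)) := by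
      ext w; simp [cycleArc, v, Fin.ext_iff]; omega
    have hfilter : {w ∈ cycleArc m a (k + 1) | ¬(cycleGraph m).Adj v w} = cycleArc m a k := by
      ext w; simp [cycleArc, v, cycleGraph_adj_iff_val hm]; omega
    rw [hinsert, altIndepSum_insert _ (by simp [cycleArc, v]; omega), hfilter, ih₀ (by omega),
      ih₁ (by omega), altIndepSumPath]

theorem altIndepSum_cycleGraph (j : ℕ) :
    (cycleGraph (j + 3)).altIndepSum univ = altIndepSumPath (j + 2) - altIndepSumPath j := by
  have hinsert : univ = insert (Fin.last (j + 2)) (cycleArc (j + 3) 0 (j + 2)) := by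
    ext w; simp [cycleArc, Fin.ext_iff]; omega
  have hfilter : {w ∈ cycleArc (j + 3) 0 (j + 2) | ¬(cycleGraph (j + 3)).Adj (Fin.last _) w} =
      cycleArc (j + 3) 1 j := by
    ext w
    simp only [cycleArc, mem_filter, mem_univ, true_and, and_true, Fin.val_last,
      cycleGraph_adj_iff_val (show 2 ≤ j + 3 by omega)]
    omega
  rw [hinsert, altIndepSum_insert _ (by simp [cycleArc]), hfilter,
    altIndepSum_cycleArc _ (by omega), altIndepSum_cycleArc _ (by omega)]

end SimpleGraph

/-- For the cycle `C_{3n}` (`n ≥ 1`): `|χ̃(Ind(C_{3n}))| = 2` (computed as the absolute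
value of the alternating sum over independent sets) and the decycling number is `1`,
so the bound `|χ̃| ≤ 2^{φ}` is tight. -/
theorem cycle_three_n_tight (n : ℕ) (hn : 1 ≤ n) :
    (∑ s ∈ Finset.univ.filter (SimpleGraph.cycleGraph (3 * n)).IsIndep,
        (-1 : ℤ) ^ s.card).natAbs = 2
    ∧ sInf {k : ℕ | ∃ D : Finset (Fin (3 * n)), D.card = k ∧
        ((SimpleGraph.cycleGraph (3 * n)).induce ((↑D : Set (Fin (3 * n)))ᶜ)).IsAcyclic}
      = 1 := by
  obtain ⟨j, rfl⟩ : ∃ j, n = j + 1 := ⟨n - 1, by omega⟩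
  rw [show 3 * (j + 1) = 3 * j + 3 by ring]
  refine ⟨?_, SimpleGraph.decyclingNumber_eq_one
    (fun h => h _ SimpleGraph.cycleGraph.isCycle_cycle)
    (SimpleGraph.isAcyclic_induce_compl_zero_cycleGraph _)⟩
  rw [← powerset_univ, ← SimpleGraph.altIndepSum, SimpleGraph.altIndepSum_cycleGraph,
    SimpleGraph.altIndepSumPath_three_mul_add j 2, ← add_zero (3 * j),
    SimpleGraph.altIndepSumPath_three_mul_add j 0]
  rcases neg_one_pow_eq_or ℤ j with h | h <;> simp [h, SimpleGraph.altIndepSumPath]
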